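/- arXiv:math/0611742 — 2 statements merged into one kernel-verified Lean document; each statement's English description precedes it below -/
import Mathlib

section
/- Let (A,m) be a multiarrangement in V = K^ℓ. For a prime ideal P ⊆ S and X ∈ L(A), let X(P) = ∩{H ∈ A : X ⊆ H and α_H ∈ P}. Then for every p with 0 ≤ p ≤ ℓ, the localization at P of the inclusion D^p(A_X,m_X) ⊆ D^p(A_{X(P)},m_{X(P)}) is an isomorphism: D^p(A_X,m_X)_P = D^p(A_{X(P)},m_{X(P)})_P. (That is, the functors D^p : L(A) → (S-Mod) are local.) -/
open MvPolynomial

attribute [local instance] Classical.propDecidable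

noncomputable section

/-- The linear form (degree-one polynomial) associated to a linear functional on `K^ℓ`. -/
def formPoly {K : Type*} [Field K] {ℓ : ℕ} (φ : Module.Dual K (Fin ℓ → K)) :
    MvPolynomial (Fin ℓ) K :=
  ∑ i : Fin ℓ, MvPolynomial.C (φ (Pi.single i 1)) * MvPolynomial.X i

/-- A multiarrangement of hyperplanes in `K^ℓ`: a finite set of (pairwise distinct)
hyperplanes, recorded by nonzero defining linear functionals with pairwise distinct
kernels, together with a positive multiplicity attached to each hyperplane. -/
structure MultiArr (K : Type*) [Field K] (ℓ : ℕ) where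
  duals : Finset (Module.Dual K (Fin ℓ → K))
  ne_zero : ∀ φ ∈ duals, φ ≠ 0
  distinct_ker : ∀ φ ∈ duals, ∀ ψ ∈ duals, φ ≠ ψ → LinearMap.ker φ ≠ LinearMap.ker ψ
  mult : Module.Dual K (Fin ℓ → K) → ℕ
  mult_pos : ∀ φ ∈ duals, 0 < mult φ

variable {K : Type*} [Field K] {ℓ : ℕ}

/-- `Der^p(S)`-condition: an alternating `p`-multilinear map is a `K`-derivation in each
variable. -/
def IsMultiDer {p : ℕ}
    (θ : (MvPolynomial (Fin ℓ) K) [⋀^Fin p]→ₗ[K] (MvPolynomial (Fin ℓ) K)) : Prop :=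
  ∀ (i : Fin p) (v : Fin p → MvPolynomial (Fin ℓ) K) (f g : MvPolynomial (Fin ℓ) K),
    θ (Function.update v i (f * g)) =
      f * θ (Function.update v i g) + g * θ (Function.update v i f)

/-- The module of `p`-derivations `D^p(𝒜,m)` of a multiarrangement, as a submodule of the
alternating `p`-multilinear maps (for `p = 0` this is all of `S ≅ Der^0(S)`). -/
def Dp (A : MultiArr K ℓ) (p : ℕ) :
    Submodule (MvPolynomial (Fin ℓ) K)
      ((MvPolynomial (Fin ℓ) K) [⋀^Fin p]→ₗ[K] (MvPolynomial (Fin ℓ) K)) where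
  carrier := {θ | IsMultiDer θ ∧ ∀ φ ∈ A.duals, ∀ v : Fin p → MvPolynomial (Fin ℓ) K,
    ∀ i : Fin p, v i = formPoly φ → θ v ∈ Ideal.span {formPoly φ ^ A.mult φ}}
  add_mem' := by
    rintro θ η ⟨hθ, hθ'⟩ ⟨hη, hη'⟩
    refine ⟨fun i v f g => ?_, fun φ hφ v i hv => ?_⟩
    · simp only [AlternatingMap.add_apply, hθ i v f g, hη i v f g]; ring
    · simpa using add_mem (hθ' φ hφ v i hv) (hη' φ hφ v i hv)
  zero_mem' := by
    refine ⟨fun i v f g => by simp, fun φ hφ v i hv => by simp⟩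
  smul_mem' := by
    rintro c θ ⟨hθ, hθ'⟩
    refine ⟨fun i v f g => ?_, fun φ hφ v i hv => ?_⟩
    · simp only [AlternatingMap.smul_apply, smul_eq_mul, hθ i v f g]; ring
    · simpa using Ideal.mul_mem_left _ c (hθ' φ hφ v i hv)

/-- The subarrangement `(𝒜_X, m_X)`, consisting of the hyperplanes of `𝒜` containing `X`,
with the restricted multiplicity. -/
def restrictArr (A : MultiArr K ℓ) (X : Submodule K (Fin ℓ → K)) : MultiArr K ℓ where
  duals := A.duals.filter (fun φ => X ≤ LinearMap.ker φ)
  ne_zero := fun φ hφ => A.ne_zero φ (Finset.mem_filter.mp hφ).1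
  distinct_ker := fun φ hφ ψ hψ =>
    A.distinct_ker φ (Finset.mem_filter.mp hφ).1 ψ (Finset.mem_filter.mp hψ).1
  mult := A.mult
  mult_pos := fun φ hφ => A.mult_pos φ (Finset.mem_filter.mp hφ).1

/-- `X(P) = ⋂ H`, the intersection being over all `H ∈ 𝒜` with `X ⊆ H` and `α_H ∈ P`. -/
def XofP (A : MultiArr K ℓ) (X : Submodule K (Fin ℓ → K))
    (P : Ideal (MvPolynomial (Fin ℓ) K)) : Submodule K (Fin ℓ → K) :=
  ⨅ (φ : Module.Dual K (Fin ℓ → K))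
    (_ : φ ∈ A.duals ∧ X ≤ LinearMap.ker φ ∧ formPoly φ ∈ P), LinearMap.ker φ

lemma le_XofP (A : MultiArr K ℓ) (X : Submodule K (Fin ℓ → K))
    (P : Ideal (MvPolynomial (Fin ℓ) K)) : X ≤ XofP A X P :=
  le_iInf fun _ => le_iInf fun h => h.2.1

/-- `𝒜_Y ⊆ 𝒜_X` for `X ≤ Y`, hence `D^p(𝒜_X, m_X) ⊆ D^p(𝒜_Y, m_Y)`. -/
lemma Dp_restrict_mono (A : MultiArr K ℓ) {X Y : Submodule K (Fin ℓ → K)}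
    (hXY : X ≤ Y) (p : ℕ) :
    Dp (restrictArr A X) p ≤ Dp (restrictArr A Y) p := by
  rintro θ ⟨h1, h2⟩
  refine ⟨h1, fun φ hφ v i hv => ?_⟩
  have hφ' := Finset.mem_filter.mp hφ
  exact h2 φ (Finset.mem_filter.mpr ⟨hφ'.1, le_trans hXY hφ'.2⟩) v i hv

/-!
Let `s` be the product of the `α_H ^ m(H)` over the hyperplanes `H ∈ 𝒜_X` with `α_H ∉ P`; since
`P` is prime, `s ∉ P`, so `s` is a unit after localizing at `P`. For `θ ∈ D^p(𝒜_{X(P)})`, the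
multiple `s • θ` lies in `D^p(𝒜_X)`: the hyperplanes of `𝒜_X` with `α_H ∈ P` are exactly those of
`𝒜_{X(P)}`, and for the others `α_H ^ m(H)` divides `s`. Hence the localized inclusion is onto.
-/

theorem LocalizedModule.map_inclusion_bijective_of_smul_mem {R M : Type*} [CommRing R]
    [AddCommGroup M] [Module R M] (S : Submonoid R) {N N' : Submodule R M} (h : N ≤ N')
    (hsmul : ∀ x ∈ N', ∃ s ∈ S, s • x ∈ N) :
    Function.Bijective (LocalizedModule.map S (Submodule.inclusion h)) := by
  refine ⟨LocalizedModule.map_injective _ _ (Submodule.inclusion_injective h), fun y => ?_⟩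
  induction y using LocalizedModule.induction_on with
  | h x t =>
    obtain ⟨s, hs, hsx⟩ := hsmul x x.2
    refine ⟨LocalizedModule.mk ⟨_, hsx⟩ (⟨s, hs⟩ * t), ?_⟩
    have hx : Submodule.inclusion h ⟨_, hsx⟩ = (⟨s, hs⟩ : S) • x := rfl
    rw [LocalizedModule.map_mk, hx, LocalizedModule.mk_cancel_common_left]

theorem mem_restrictArr_XofP {A : MultiArr K ℓ} {X : Submodule K (Fin ℓ → K)}
    {P : Ideal (MvPolynomial (Fin ℓ) K)} {φ : Module.Dual K (Fin ℓ → K)}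
    (hφ : φ ∈ (restrictArr A X).duals) (hφP : formPoly φ ∈ P) :
    φ ∈ (restrictArr A (XofP A X P)).duals := by
  obtain ⟨hφA, hXφ⟩ := Finset.mem_filter.mp hφ
  exact Finset.mem_filter.mpr ⟨hφA, iInf₂_le φ ⟨hφA, hXφ, hφP⟩⟩

def offPrimeFactor (A : MultiArr K ℓ) (X : Submodule K (Fin ℓ → K))
    (P : Ideal (MvPolynomial (Fin ℓ) K)) : MvPolynomial (Fin ℓ) K :=
  ∏ φ ∈ (restrictArr A X).duals.filter (fun φ => formPoly φ ∉ P), formPoly φ ^ A.mult φ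

theorem offPrimeFactor_mem_primeCompl (A : MultiArr K ℓ) (X : Submodule K (Fin ℓ → K))
    (P : Ideal (MvPolynomial (Fin ℓ) K)) [P.IsPrime] :
    offPrimeFactor A X P ∈ P.primeCompl :=
  Submonoid.prod_mem _ fun _ hφ hpow =>
    (Finset.mem_filter.mp hφ).2 (Ideal.IsPrime.mem_of_pow_mem ‹_› _ hpow)

theorem offPrimeFactor_smul_mem_Dp (A : MultiArr K ℓ) (X : Submodule K (Fin ℓ → K))
    (P : Ideal (MvPolynomial (Fin ℓ) K)) {p : ℕ} {θ}
    (hθ : θ ∈ Dp (restrictArr A (XofP A X P)) p) :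
    offPrimeFactor A X P • θ ∈ Dp (restrictArr A X) p := by
  obtain ⟨hder, hdiv⟩ := (Dp _ p).smul_mem (offPrimeFactor A X P) hθ
  refine ⟨hder, fun φ hφ v i hv => ?_⟩
  by_cases hφP : formPoly φ ∈ P
  · exact hdiv φ (mem_restrictArr_XofP hφ hφP) v i hv
  · have hpow : formPoly φ ^ A.mult φ ∣ offPrimeFactor A X P :=
      Finset.dvd_prod_of_mem _ (Finset.mem_filter.mpr ⟨hφ, hφP⟩)
    exact Ideal.mem_span_singleton.mpr (hpow.mul_right _)

theorem Dp_localization_bijective_general (A : MultiArr K ℓ) (X : Submodule K (Fin ℓ → K))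
    (P : Ideal (MvPolynomial (Fin ℓ) K)) [P.IsPrime] :
    ∀ p : ℕ, p ≤ ℓ →
      Function.Bijective (LocalizedModule.map P.primeCompl
        (Submodule.inclusion (Dp_restrict_mono A (le_XofP A X P) p))) := fun _ _ =>
  LocalizedModule.map_inclusion_bijective_of_smul_mem _ _ fun _ hθ =>
    ⟨_, offPrimeFactor_mem_primeCompl A X P, offPrimeFactor_smul_mem_Dp A X P hθ⟩

/-- For every `X` in the intersection lattice `L(𝒜)`, every prime ideal
`P ⊆ S` and every `0 ≤ p ≤ ℓ`, the localization at `P` of the inclusion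
`D^p(𝒜_X, m_X) ⊆ D^p(𝒜_{X(P)}, m_{X(P)})` is an isomorphism (the functors `D^p` are
local). -/
theorem Dp_localization_bijective (A : MultiArr K ℓ) (X : Submodule K (Fin ℓ → K))
    (hX : ∃ B ⊆ A.duals, X = ⨅ φ ∈ B, LinearMap.ker φ)
    (P : Ideal (MvPolynomial (Fin ℓ) K)) [P.IsPrime] :
    ∀ p : ℕ, p ≤ ℓ →
      Function.Bijective (LocalizedModule.map P.primeCompl
        (Submodule.inclusion (Dp_restrict_mono A (le_XofP A X P) p))) :=
  Dp_localization_bijective_general A X P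
end
end

section
/- Let K be algebraically closed and (A,m) a multiarrangement in V = K^ℓ. If h ∈ ∩_{X∈L} N^X_d (i.e., h is a homogeneous polynomial of degree d whose restriction to every X ∈ L is non-degenerate on X), then the radical of the ideal D(A,m)h of S generated by { θ(h) : θ ∈ D^1(A,m) } contains the homogeneous maximal ideal (x_1,…,x_ℓ). -/
/-!
At a point `v ≠ 0`, let `X` be the flat cut out by the hyperplanes through `v`. Non-degeneracy of
`h` on `X` gives a direction `u ∈ X` with `∂_u h (v) ≠ 0`. Multiplying `∂_u` by the product `Q` of
the `α_H ^ m(H)` over the hyperplanes not through `v` gives a derivation in `D(𝒜,m)`: it is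
tangent to the hyperplanes through `v` (they contain `u`) and divisible by the right powers of
the others. Since `Q(v) ≠ 0`, the point `v` is not a common zero of `D(𝒜,m)h`. Hence the zero
locus of `D(𝒜,m)h` is `{0}`, and the Nullstellensatz concludes.
-/

open MvPolynomial

noncomputable section

variable {K : Type*} [Field K] {ℓ : ℕ}

/-- The derivation module `D(𝒜,m) = D^1(𝒜,m) = {θ ∈ Der_K(S) : θ(α_H) ∈ α_H^{m(H)}S}`. -/
def D1 (A : MultiArr K ℓ) :
    Submodule (MvPolynomial (Fin ℓ) K)
      (Derivation K (MvPolynomial (Fin ℓ) K) (MvPolynomial (Fin ℓ) K)) where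
  carrier := {θ | ∀ φ ∈ A.duals, θ (formPoly φ) ∈ Ideal.span {formPoly φ ^ A.mult φ}}
  add_mem' := fun ha hb φ hφ => by
    simpa using add_mem (ha φ hφ) (hb φ hφ)
  zero_mem' := fun φ hφ => by simp
  smul_mem' := fun c θ hθ φ hφ => by
    simpa using Ideal.mul_mem_left _ c (hθ φ hφ)

/-- The derivative of `h` in the direction `u ∈ V`. -/
def dirDeriv (u : Fin ℓ → K) (h : MvPolynomial (Fin ℓ) K) : MvPolynomial (Fin ℓ) K :=
  ∑ i : Fin ℓ, MvPolynomial.C (u i) * MvPolynomial.pderiv i h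

/-- `h` restricts to a polynomial function on `X` that is non-degenerate on `X`
(over an algebraically closed field this is the non-degeneracy condition
`√(∂_{x_1}(h|_X),…,∂_{x_k}(h|_X)) ⊇ (x_1,…,x_k)` in `S(X^*)`): the common zero locus on
`X` of the derivatives of `h` along directions in `X` is contained in `{0}`. -/
def IsNondegOn (h : MvPolynomial (Fin ℓ) K) (X : Submodule K (Fin ℓ → K)) : Prop :=
  ∀ v ∈ X, v ≠ 0 → ∃ u ∈ X, MvPolynomial.eval v (dirDeriv u h) ≠ 0

theorem MvPolynomial.span_range_X_le_radical_of_zeroLocus_subset {σ : Type*} [Finite σ]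
    [IsAlgClosed K] {I : Ideal (MvPolynomial σ K)} (hI : zeroLocus K I ⊆ {0}) :
    Ideal.span (Set.range X) ≤ I.radical := by
  rw [← vanishingIdeal_zeroLocus_eq_radical (K := K), Ideal.span_le]
  rintro _ ⟨i, rfl⟩ v hv
  simp [Set.mem_singleton_iff.mp (hI hv)]

lemma Module.Dual.apply_eq_sum_single {ι : Type*} [Fintype ι] [DecidableEq ι]
    (φ : Module.Dual K (ι → K)) (v : ι → K) : φ v = ∑ i, v i * φ (Pi.single i 1) := by
  conv_lhs => rw [← (Pi.basisFun K ι).sum_repr v]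
  simp

lemma eval_formPoly (φ : Module.Dual K (Fin ℓ → K)) (v : Fin ℓ → K) :
    eval v (formPoly φ) = φ v := by
  simp [formPoly, φ.apply_eq_sum_single v, mul_comm]

lemma pderiv_formPoly (φ : Module.Dual K (Fin ℓ → K)) (j : Fin ℓ) :
    pderiv j (formPoly φ) = C (φ (Pi.single j 1)) := by
  simp [formPoly, pderiv_X, Pi.single_apply]

lemma dirDeriv_formPoly (u : Fin ℓ → K) (φ : Module.Dual K (Fin ℓ → K)) :
    dirDeriv u (formPoly φ) = C (φ u) := by
  simp only [dirDeriv, pderiv_formPoly, ← C_mul, ← map_sum, φ.apply_eq_sum_single u]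

def dirDerivation (u : Fin ℓ → K) :
    Derivation K (MvPolynomial (Fin ℓ) K) (MvPolynomial (Fin ℓ) K) :=
  ∑ i, (C (u i) : MvPolynomial (Fin ℓ) K) • pderiv i

@[simp]
lemma dirDerivation_apply (u : Fin ℓ → K) (p : MvPolynomial (Fin ℓ) K) :
    dirDerivation u p = dirDeriv u p := by
  rw [dirDerivation, ← Derivation.coeFnAddMonoidHom_apply, map_sum]
  simp [dirDeriv, Derivation.coeFnAddMonoidHom_apply]

lemma smul_dirDerivation_mem_D1 (A : MultiArr K ℓ) (Q : MvPolynomial (Fin ℓ) K)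
    (u : Fin ℓ → K) (hQ : ∀ φ ∈ A.duals, φ u ≠ 0 → formPoly φ ^ A.mult φ ∣ Q) :
    Q • dirDerivation u ∈ D1 A := by
  intro φ hφ
  rw [Derivation.smul_apply, dirDerivation_apply, dirDeriv_formPoly, smul_eq_mul,
    Ideal.mem_span_singleton]
  by_cases hφu : φ u = 0
  · simp [hφu]
  · exact dvd_mul_of_dvd_left (hQ φ hφ hφu) _

theorem zeroLocus_span_D1_apply_subset (A : MultiArr K ℓ) (h : MvPolynomial (Fin ℓ) K)
    (hnd : ∀ X : Submodule K (Fin ℓ → K),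
      (∃ B ⊆ A.duals, X = ⨅ φ ∈ B, LinearMap.ker φ) → IsNondegOn h X) :
    zeroLocus K (Ideal.span {g | ∃ θ ∈ D1 A, θ h = g}) ⊆ {0} := by
  classical
  intro v hv
  by_contra hv0
  let X : Submodule K (Fin ℓ → K) := ⨅ φ ∈ A.duals.filter fun φ => φ v = 0, LinearMap.ker φ
  have hvX : v ∈ X := by
    simp only [X, Submodule.mem_iInf, Finset.mem_filter]
    exact fun φ hφ => hφ.2
  obtain ⟨u, huX, hu⟩ := hnd X ⟨_, Finset.filter_subset _ _, rfl⟩ v hvX hv0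
  let Q := ∏ φ ∈ A.duals.filter fun φ => φ v ≠ 0, formPoly φ ^ A.mult φ
  have hQ : ∀ φ ∈ A.duals, φ u ≠ 0 → formPoly φ ^ A.mult φ ∣ Q := by
    intro φ hφ hφu
    refine Finset.dvd_prod_of_mem _ (Finset.mem_filter.mpr ⟨hφ, fun hφv => hφu ?_⟩)
    simp only [X, Submodule.mem_iInf, Finset.mem_filter] at huX
    exact huX φ ⟨hφ, hφv⟩
  have hQv : eval v Q ≠ 0 := by
    simp only [Q, map_prod, map_pow, eval_formPoly]
    exact Finset.prod_ne_zero_iff.mpr fun φ hφ => pow_ne_zero _ (Finset.mem_filter.mp hφ).2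
  have hθv := hv _ (Ideal.subset_span ⟨_, smul_dirDerivation_mem_D1 A Q u hQ, rfl⟩)
  simp only [Derivation.smul_apply, dirDerivation_apply, smul_eq_mul, map_mul] at hθv
  exact mul_ne_zero hQv hu hθv

theorem radical_D1_h_contains_max_ideal_general [IsAlgClosed K] (A : MultiArr K ℓ)
    (h : MvPolynomial (Fin ℓ) K)
    (hnd : ∀ X : Submodule K (Fin ℓ → K),
      (∃ B ⊆ A.duals, X = ⨅ φ ∈ B, LinearMap.ker φ) → IsNondegOn h X) :
    Ideal.span (Set.range (MvPolynomial.X : Fin ℓ → MvPolynomial (Fin ℓ) K)) ≤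
      (Ideal.span {g | ∃ θ ∈ D1 A, θ h = g}).radical :=
  span_range_X_le_radical_of_zeroLocus_subset (zeroLocus_span_D1_apply_subset A h hnd)

/-- Let `K` be algebraically closed. If `h` is a homogeneous polynomial of
degree `d` lying in `⋂_{X ∈ L} N^X_d` (its restriction to every member of the intersection
lattice is non-degenerate), then the radical of the ideal `D(𝒜,m)h` generated by
`{θ(h) : θ ∈ D^1(𝒜,m)}` contains the homogeneous maximal ideal `(x_1,…,x_ℓ)`. -/
theorem radical_D1_h_contains_max_ideal [IsAlgClosed K] (A : MultiArr K ℓ)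
    (d : ℕ) (h : MvPolynomial (Fin ℓ) K) (hd : h.IsHomogeneous d)
    (hnd : ∀ X : Submodule K (Fin ℓ → K),
      (∃ B ⊆ A.duals, X = ⨅ φ ∈ B, LinearMap.ker φ) → IsNondegOn h X) :
    Ideal.span (Set.range (MvPolynomial.X : Fin ℓ → MvPolynomial (Fin ℓ) K)) ≤
      (Ideal.span {g | ∃ θ ∈ D1 A, θ h = g}).radical :=
  radical_D1_h_contains_max_ideal_general A h hnd
end
end
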